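/- arXiv:alg-geom/9703023 — 5 statements merged into one kernel-verified Lean document; each statement's English description precedes it below -/
import Mathlib

section
/- Let n be a natural number and let h : ℕ × ℕ → ℤ satisfy h(p,q) = h(q,p) for all p,q, with h supported on {0,...,n}². If h(p,q)=0 whenever p+q is odd, then ∑_{k=0}^{n} (∑_{p+q=2k} h(p,q))·(2k-n)² = ∑_{p=0}^n (∑_q h(p,q))·(2p-n)² − ∑_{p,q} h(p,q)·(q-p)². -/
open Finset

theorem stmt1 (n : ℕ) (h : ℕ × ℕ → ℤ)
    (hsupp : ∀ p q, (n < p ∨ n < q) → h (p, q) = 0)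
    (hsym : ∀ p q, h (p, q) = h (q, p))
    (hodd : ∀ p q, Odd (p + q) → h (p, q) = 0) :
    ∑ k ∈ range (n + 1),
        (∑ p ∈ range (n + 1), ∑ q ∈ range (n + 1),
          if p + q = 2 * k then h (p, q) else 0) * ((2 * k : ℤ) - n) ^ 2 =
      ∑ p ∈ range (n + 1),
          (∑ q ∈ range (n + 1), h (p, q)) * ((2 * p : ℤ) - n) ^ 2 -
        ∑ p ∈ range (n + 1), ∑ q ∈ range (n + 1),
          h (p, q) * ((q : ℤ) - p) ^ 2 := by
  have key : ∑ k ∈ range (n + 1),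
        (∑ p ∈ range (n + 1), ∑ q ∈ range (n + 1),
          if p + q = 2 * k then h (p, q) else 0) * ((2 * k : ℤ) - n) ^ 2
      = ∑ p ∈ range (n + 1), ∑ q ∈ range (n + 1),
          h (p, q) * (((p : ℤ) + q) - n) ^ 2 := by
    simp_rw [sum_mul, ite_mul, zero_mul]
    rw [sum_comm]
    refine sum_congr rfl fun p hp => ?_
    rw [sum_comm]
    refine sum_congr rfl fun q hq => ?_
    rcases Nat.even_or_odd (p + q) with he | ho
    · obtain ⟨m, hm⟩ := he
      have hp' := mem_range.mp hp
      have hq' := mem_range.mp hq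
      rw [Finset.sum_eq_single m]
      · rw [if_pos (by omega)]
        have hcast : ((p : ℤ) + q) = 2 * m := by push_cast; omega
        rw [hcast]
      · intro k _ hk
        rw [if_neg (by omega)]
      · intro hm'
        exfalso; exact hm' (mem_range.mpr (by omega))
    · simp [hodd p q ho]
  rw [key]
  have anti : ∑ p ∈ range (n + 1), ∑ q ∈ range (n + 1),
      h (p, q) * (2 * ((q : ℤ) - p) * (((p : ℤ) + q) - n)) = 0 := by
    have hS : ∑ p ∈ range (n + 1), ∑ q ∈ range (n + 1),
        h (p, q) * (2 * ((q : ℤ) - p) * (((p : ℤ) + q) - n))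
      = -∑ p ∈ range (n + 1), ∑ q ∈ range (n + 1),
          h (p, q) * (2 * ((q : ℤ) - p) * (((p : ℤ) + q) - n)) := by
      conv_lhs => rw [Finset.sum_comm]
      rw [← Finset.sum_neg_distrib]
      refine sum_congr rfl fun p _ => ?_
      rw [← Finset.sum_neg_distrib]
      refine sum_congr rfl fun q _ => ?_
      rw [hsym q p]; ring
    linarith
  have expand : ∑ p ∈ range (n + 1), ∑ q ∈ range (n + 1),
      h (p, q) * (((p : ℤ) + q) - n) ^ 2
    = (∑ p ∈ range (n + 1), ∑ q ∈ range (n + 1),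
        h (p, q) * ((2 * p : ℤ) - n) ^ 2)
      - (∑ p ∈ range (n + 1), ∑ q ∈ range (n + 1),
        h (p, q) * ((q : ℤ) - p) ^ 2)
      + ∑ p ∈ range (n + 1), ∑ q ∈ range (n + 1),
        h (p, q) * (2 * ((q : ℤ) - p) * (((p : ℤ) + q) - n)) := by
    rw [← Finset.sum_sub_distrib, ← Finset.sum_add_distrib]
    refine sum_congr rfl fun p _ => ?_
    rw [← Finset.sum_sub_distrib, ← Finset.sum_add_distrib]
    refine sum_congr rfl fun q _ => ?_
    ring
  rw [expand, anti, add_zero]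
  congr 1
  refine sum_congr rfl fun p _ => ?_
  rw [Finset.sum_mul]
end

section
/- Let n be a natural number and h : ℕ × ℕ → ℕ a function supported on {0,...,n}² with h(p,q) = h(q,p), and suppose h(p,q) = 0 whenever p+q is odd. Then ∑_{k=0}^n (∑_{p+q=2k} h(p,q))·(2k-n)² ≤ ∑_{p=0}^n (∑_q h(p,q))·(2p-n)², with equality if and only if h(p,q) = 0 for all p ≠ q. -/
open Finset

theorem stmt2 (n : ℕ) (h : ℕ × ℕ → ℕ)
    (hsupp : ∀ p q, (n < p ∨ n < q) → h (p, q) = 0)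
    (hsym : ∀ p q, h (p, q) = h (q, p))
    (hodd : ∀ p q, Odd (p + q) → h (p, q) = 0) :
    (∑ k ∈ range (n + 1),
        (∑ p ∈ range (n + 1), ∑ q ∈ range (n + 1),
          if p + q = 2 * k then (h (p, q) : ℤ) else 0) * ((2 * k : ℤ) - n) ^ 2) ≤
      ∑ p ∈ range (n + 1),
        (∑ q ∈ range (n + 1), (h (p, q) : ℤ)) * ((2 * p : ℤ) - n) ^ 2 ∧
    ((∑ k ∈ range (n + 1),
        (∑ p ∈ range (n + 1), ∑ q ∈ range (n + 1),
          if p + q = 2 * k then (h (p, q) : ℤ) else 0) * ((2 * k : ℤ) - n) ^ 2) =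
      (∑ p ∈ range (n + 1),
        (∑ q ∈ range (n + 1), (h (p, q) : ℤ)) * ((2 * p : ℤ) - n) ^ 2) ↔
      ∀ p q, p ≠ q → h (p, q) = 0) := by
  set L := (∑ k ∈ range (n + 1),
        (∑ p ∈ range (n + 1), ∑ q ∈ range (n + 1),
          if p + q = 2 * k then (h (p, q) : ℤ) else 0) * ((2 * k : ℤ) - n) ^ 2) with hLdef
  set R := ∑ p ∈ range (n + 1),
        (∑ q ∈ range (n + 1), (h (p, q) : ℤ)) * ((2 * p : ℤ) - n) ^ 2 with hRdef
  set E := ∑ p ∈ range (n + 1), ∑ q ∈ range (n + 1),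
      (h (p, q) : ℤ) * ((p : ℤ) - q) ^ 2 with hEdef
  -- L as a double sum
  have key : ∀ p ∈ range (n + 1), ∀ q ∈ range (n + 1),
      (∑ k ∈ range (n + 1),
        (if p + q = 2 * k then (h (p, q) : ℤ) else 0) * ((2 * k : ℤ) - n) ^ 2)
        = (h (p, q) : ℤ) * (((p : ℤ) + q) - n) ^ 2 := by
    intro p hp q hq
    simp only [mem_range] at hp hq
    rcases Nat.even_or_odd (p + q) with ⟨k0, hk0⟩ | ho
    · have hk : p + q = 2 * k0 := by omega
      rw [Finset.sum_eq_single k0]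
      · have : ((p : ℤ) + q) = 2 * k0 := by exact_mod_cast hk
        simp [hk, this]
      · intro b _ hb
        have : p + q ≠ 2 * b := by omega
        simp [this]
      · intro hk0n
        simp only [mem_range] at hk0n
        omega
    · have h0 : h (p, q) = 0 := hodd p q ho
      simp [h0]
  have hL : L = ∑ p ∈ range (n + 1), ∑ q ∈ range (n + 1),
      (h (p, q) : ℤ) * (((p : ℤ) + q) - n) ^ 2 := by
    rw [hLdef]
    simp_rw [Finset.sum_mul]
    rw [Finset.sum_comm]
    refine Finset.sum_congr rfl fun p hp => ?_
    rw [Finset.sum_comm]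
    exact Finset.sum_congr rfl fun q hq => key p hp q hq
  have hR : R = ∑ p ∈ range (n + 1), ∑ q ∈ range (n + 1),
      (h (p, q) : ℤ) * ((2 * p : ℤ) - n) ^ 2 := by
    rw [hRdef]; simp_rw [Finset.sum_mul]
  -- symmetry
  have hS : (∑ p ∈ range (n + 1), ∑ q ∈ range (n + 1),
      (h (p, q) : ℤ) * ((2 * p : ℤ) - n) ^ 2)
      = ∑ p ∈ range (n + 1), ∑ q ∈ range (n + 1),
      (h (p, q) : ℤ) * ((2 * q : ℤ) - n) ^ 2 := by
    rw [Finset.sum_comm]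
    exact Finset.sum_congr rfl fun a _ => Finset.sum_congr rfl fun b _ => by
      rw [hsym]
  have hkey : R = L + E := by
    have h2 : (∑ p ∈ range (n + 1), ∑ q ∈ range (n + 1),
        (h (p, q) : ℤ) * ((2 * p : ℤ) - n) ^ 2)
        + (∑ p ∈ range (n + 1), ∑ q ∈ range (n + 1),
        (h (p, q) : ℤ) * ((2 * q : ℤ) - n) ^ 2) = (L + E) + (L + E) := by
      rw [hL, hEdef]
      rw [← Finset.sum_add_distrib, ← Finset.sum_add_distrib,
        ← Finset.sum_add_distrib]
      refine Finset.sum_congr rfl fun p _ => ?_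
      rw [← Finset.sum_add_distrib, ← Finset.sum_add_distrib,
        ← Finset.sum_add_distrib]
      refine Finset.sum_congr rfl fun q _ => ?_
      ring
    linarith [hR, hS, h2]
  have hEnonneg : 0 ≤ E := by
    refine Finset.sum_nonneg fun p _ => Finset.sum_nonneg fun q _ => ?_
    positivity
  constructor
  · linarith
  · rw [hkey]
    constructor
    · intro hEq
      have hE0 : E = 0 := by linarith
      intro p q hpq
      by_cases hp : p ≤ n ∧ q ≤ n
      · have hE0' : (∑ p ∈ range (n + 1), ∑ q ∈ range (n + 1),
            (h (p, q) : ℤ) * ((p : ℤ) - q) ^ 2) = 0 := by rw [← hEdef]; exact hE0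
        have h2 := (Finset.sum_eq_zero_iff_of_nonneg
          (fun a (_ : a ∈ range (n+1)) => Finset.sum_nonneg
            fun b _ => by positivity)).mp hE0' p (mem_range.mpr (by omega))
        have h3 := (Finset.sum_eq_zero_iff_of_nonneg
          (fun b (_ : b ∈ range (n+1)) => by positivity)).mp h2 q
          (mem_range.mpr (by omega))
        have hne : ((p : ℤ) - q) ^ 2 ≠ 0 := by
          have : (p : ℤ) ≠ q := by exact_mod_cast hpq
          intro hc
          exact this (by nlinarith [sq_nonneg ((p:ℤ) - q)])
        have : (h (p, q) : ℤ) = 0 := by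
          rcases mul_eq_zero.mp h3 with h' | h'
          · exact h'
          · exact absurd h' hne
        exact_mod_cast this
      · exact hsupp p q (by omega)
    · intro hdiag
      have : E = 0 := by
        rw [hEdef]
        refine Finset.sum_eq_zero fun p _ => Finset.sum_eq_zero fun q _ => ?_
        by_cases hpq : p = q
        · subst hpq; simp
        · simp [hdiag p q hpq]
      linarith
end

section
/- Let α_1, ..., α_n be commuting variables. Then the degree-n homogeneous part of 2∑_{i<j} ∏_{k≠i,j} α_k · (1 - α_i/2 + α_i²/12)(1 - α_j/2 + α_j²/12) equals (1/6)·e_1(α)·e_{n-1}(α) + (n²/4 - 5n/12)·e_n(α), where e_k denotes the k-th elementary symmetric polynomial in α_1, ..., α_n. -/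
open Finset MvPolynomial

private lemma prodX_homog {n : ℕ} (s : Finset (Fin n)) :
    (∏ k ∈ s, (X k : MvPolynomial (Fin n) ℚ)).IsHomogeneous s.card := by
  simpa using IsHomogeneous.prod s (fun k => (X k : MvPolynomial (Fin n) ℚ))
    (fun k => 1) (fun k _ => isHomogeneous_X _ _)

private lemma esymm_top {n : ℕ} : esymm (Fin n) ℚ n = ∏ k, X k := by
  have h : powersetCard n (univ : Finset (Fin n)) = {univ} := by
    simpa using powersetCard_self (univ : Finset (Fin n))
  rw [esymm, h, sum_singleton]

private lemma esymm_pred {n : ℕ} (hn : 1 ≤ n) :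
    esymm (Fin n) ℚ (n-1) = ∑ j, ∏ k ∈ univ.erase j, X k := by
  have himg : powersetCard (n-1) (univ : Finset (Fin n)) =
      univ.image (fun j => univ.erase j) := by
    ext s
    simp only [mem_powersetCard, mem_image, mem_univ, true_and]
    constructor
    · rintro ⟨-, hcard⟩
      have hc : #sᶜ = 1 := by
        rw [Finset.card_compl, hcard]
        simp
        omega
      obtain ⟨j, hj⟩ := Finset.card_eq_one.mp hc
      exact ⟨j, by rw [← Finset.compl_singleton, ← hj, compl_compl]⟩
    · rintro ⟨j, rfl⟩
      refine ⟨subset_univ _, ?_⟩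
      rw [Finset.card_erase_of_mem (mem_univ j)]
      simp
  rw [esymm, himg, sum_image]
  intro a _ b _ h
  by_contra hab
  have hm : a ∈ univ.erase b := mem_erase.mpr ⟨hab, mem_univ a⟩
  rw [← show univ.erase a = univ.erase b from h] at hm
  exact (mem_erase.mp hm).1 rfl

private lemma sdiff_pair_eq {n : ℕ} {i j : Fin n} :
    (univ : Finset (Fin n)) \ {i, j} = (univ.erase j).erase i := by
  ext k
  simp only [mem_sdiff, mem_insert, mem_singleton, mem_erase, mem_univ, true_and, and_true]
  tauto

private lemma X_mul_P {n : ℕ} {i j : Fin n} (hij : i ≠ j) :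
    (X i : MvPolynomial (Fin n) ℚ) * ∏ k ∈ univ \ {i, j}, X k =
      ∏ k ∈ univ.erase j, X k := by
  rw [sdiff_pair_eq]
  exact Finset.mul_prod_erase _ _ (mem_erase.mpr ⟨hij, mem_univ i⟩)

private lemma X_mul_erase {n : ℕ} (i : Fin n) :
    (X i : MvPolynomial (Fin n) ℚ) * ∏ k ∈ univ.erase i, X k = ∏ k, X k :=
  Finset.mul_prod_erase _ _ (mem_univ i)

private lemma sum_pairs {M : Type*} [AddCommMonoid M] {n : ℕ} (g : Fin n → Fin n → M) :
    ∑ i : Fin n, ∑ j ∈ univ.filter (fun j => i < j), (g i j + g j i)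
      = ∑ i : Fin n, ∑ j ∈ univ.erase i, g i j := by
  have hswap : ∑ i : Fin n, ∑ j ∈ univ.filter (fun j => i < j), g j i
      = ∑ i : Fin n, ∑ j ∈ univ.filter (fun j => j < i), g i j := by
    refine (Finset.sum_comm' ?_).trans rfl
    intro x y
    simp only [mem_filter, mem_univ, true_and, and_comm]
  simp only [Finset.sum_add_distrib]
  rw [hswap, ← Finset.sum_add_distrib]
  refine Finset.sum_congr rfl fun i _ => ?_
  rw [← Finset.sum_union (by
    simp only [Finset.disjoint_filter]
    intro j _ h1 h2
    exact absurd h2 (asymm h1))]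
  refine Finset.sum_congr ?_ fun _ _ => rfl
  ext k
  simp only [mem_union, mem_filter, mem_univ, true_and, mem_erase, and_true]
  constructor
  · rintro (h | h)
    · exact (ne_of_gt h)
    · exact (ne_of_lt h)
  · intro h
    exact (lt_or_gt_of_ne h.symm).imp id id

private lemma aux_pair {n : ℕ} (hn : 2 ≤ n) {i j : Fin n} (hij : i ≠ j) :
    homogeneousComponent n
      ((∏ k ∈ (univ \ {i, j}), (X k : MvPolynomial (Fin n) ℚ)) *
        (1 - C (1/2 : ℚ) * X i + C (1/12 : ℚ) * X i ^ 2) *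
        (1 - C (1/2 : ℚ) * X j + C (1/12 : ℚ) * X j ^ 2))
    = (C (1/8 : ℚ) * ∏ k, X k + C (1/12 : ℚ) * (X i * ∏ k ∈ univ.erase j, X k))
      + (C (1/8 : ℚ) * ∏ k, X k + C (1/12 : ℚ) * (X j * ∏ k ∈ univ.erase i, X k)) := by
  set P : MvPolynomial (Fin n) ℚ := ∏ k ∈ (univ \ {i, j}), X k with hPdef
  have hcard : ((univ : Finset (Fin n)) \ {i, j}).card = n - 2 := by
    rw [Finset.card_sdiff, Finset.inter_univ, card_univ, Fintype.card_fin,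
      Finset.card_pair hij]
  have hP : P.IsHomogeneous (n - 2) := hcard ▸ prodX_homog _
  have hX : ∀ k : Fin n, (X k : MvPolynomial (Fin n) ℚ).IsHomogeneous 1 :=
    fun k => isHomogeneous_X _ _
  have hX2 : ∀ k : Fin n, ((X k : MvPolynomial (Fin n) ℚ) ^ 2).IsHomogeneous 2 :=
    fun k => by simpa using (hX k).pow 2
  have hdec : P * (1 - C (1/2 : ℚ) * X i + C (1/12 : ℚ) * X i ^ 2) *
        (1 - C (1/2 : ℚ) * X j + C (1/12 : ℚ) * X j ^ 2)
      = P - C (1/2 : ℚ) * ((X i + X j) * P)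
        + (C (1/2 : ℚ) * (C (1/2 : ℚ) * (X i * (X j * P)))
            + C (1/12 : ℚ) * (X i ^ 2 * P + X j ^ 2 * P))
        - C (1/2 : ℚ) * (C (1/12 : ℚ) * (X i ^ 2 * (X j * P) + X i * (X j ^ 2 * P)))
        + C (1/12 : ℚ) * (C (1/12 : ℚ) * (X i ^ 2 * (X j ^ 2 * P))) := by
    ring
  rw [hdec]
  have hz : ∀ (q : MvPolynomial (Fin n) ℚ) (d : ℕ), q.IsHomogeneous d → d ≠ n →
      homogeneousComponent n q = 0 := by
    intro q d hq hd
    rw [homogeneousComponent_of_mem ((mem_homogeneousSubmodule _ _).mpr hq),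
      if_neg (fun h => hd h.symm)]
  have he : ∀ (q : MvPolynomial (Fin n) ℚ), q.IsHomogeneous n →
      homogeneousComponent n q = q := by
    intro q hq
    rw [homogeneousComponent_of_mem ((mem_homogeneousSubmodule _ _).mpr hq), if_pos rfl]
  have h0 : homogeneousComponent n P = 0 := hz P (n-2) hP (by omega)
  have h1 : homogeneousComponent n ((X i + X j) * P) = 0 :=
    hz _ (1 + (n-2)) (((hX i).add (hX j)).mul hP) (by omega)
  have h2a : homogeneousComponent n (X i * (X j * P)) = X i * (X j * P) :=
    he _ (by
      have := (hX i).mul ((hX j).mul hP)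
      rwa [show 1 + (1 + (n-2)) = n by omega] at this)
  have h2b : homogeneousComponent n (X i ^ 2 * P + X j ^ 2 * P) = X i ^ 2 * P + X j ^ 2 * P :=
    he _ (by
      have h1' := (hX2 i).mul hP
      have h2' := (hX2 j).mul hP
      rw [show (2 + (n-2)) = n by omega] at h1' h2'
      exact h1'.add h2')
  have h3 : homogeneousComponent n (X i ^ 2 * (X j * P) + X i * (X j ^ 2 * P)) = 0 :=
    hz _ (2 + (1 + (n-2)))
      (((hX2 i).mul ((hX j).mul hP)).add
        (by
          have := (hX i).mul ((hX2 j).mul hP)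
          rwa [show 1 + (2 + (n-2)) = 2 + (1 + (n-2)) by omega] at this))
      (by omega)
  have h4 : homogeneousComponent n (X i ^ 2 * (X j ^ 2 * P)) = 0 :=
    hz _ (2 + (2 + (n-2))) ((hX2 i).mul ((hX2 j).mul hP)) (by omega)
  simp only [map_add, map_sub, homogeneousComponent_C_mul, h0, h1, h2a, h2b, h3, h4]
  have e1 : X j * P = ∏ k ∈ univ.erase i, X k := by
    rw [hPdef, Finset.pair_comm]
    exact X_mul_P hij.symm
  have e2 : (X i : MvPolynomial (Fin n) ℚ) * (X j * P) = ∏ k, X k := by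
    rw [e1]; exact X_mul_erase i
  have e3 : (X i : MvPolynomial (Fin n) ℚ) ^ 2 * P = X i * ∏ k ∈ univ.erase j, X k := by
    rw [sq, mul_assoc, X_mul_P hij]
  have e4 : (X j : MvPolynomial (Fin n) ℚ) ^ 2 * P = X j * ∏ k ∈ univ.erase i, X k := by
    rw [sq, mul_assoc, ← e1]
  rw [e2, e3, e4]
  have hc : (C (1/2 : ℚ) * C (1/2 : ℚ) : MvPolynomial (Fin n) ℚ)
      = C (1/8 : ℚ) + C (1/8 : ℚ) := by
    rw [← map_mul, ← map_add]
    norm_num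
  have hc' : (C (1/2 : ℚ) : MvPolynomial (Fin n) ℚ) * (C (1/2 : ℚ) * (X i * (X j * P)))
      = (C (1/8 : ℚ) + C (1/8 : ℚ)) * (X i * (X j * P)) := by
    rw [← mul_assoc, hc]
  rw [e2] at hc'
  rw [hc']
  ring

theorem stmt7 (n : ℕ) :
    (MvPolynomial.homogeneousComponent n
        (2 * ∑ i : Fin n, ∑ j ∈ univ.filter (fun j => i < j),
          (∏ k ∈ (univ \ {i, j}), (X k : MvPolynomial (Fin n) ℚ)) *
            (1 - C (1/2 : ℚ) * X i + C (1/12 : ℚ) * X i ^ 2) *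
            (1 - C (1/2 : ℚ) * X j + C (1/12 : ℚ) * X j ^ 2))) =
      C (1/6 : ℚ) * esymm (Fin n) ℚ 1 * esymm (Fin n) ℚ (n - 1) +
        C ((n : ℚ) ^ 2 / 4 - 5 * n / 12) * esymm (Fin n) ℚ n := by
  rcases Nat.lt_or_ge n 2 with hn | hn
  · interval_cases n
    · simp [esymm_one, esymm_zero]
    · have hf : ∀ i : Fin 1, univ.filter (fun j => i < j) = ∅ := by decide
      simp only [hf, sum_empty, Finset.sum_const_zero, mul_zero, map_zero, esymm_one]
      rw [show (1-1 : ℕ) = 0 from rfl, esymm_zero, mul_one]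
      rw [show ((1:ℕ) : ℚ) ^ 2 / 4 - 5 * ((1:ℕ) : ℚ) / 12 = -(1/6 : ℚ) by norm_num, map_neg]
      ring
  · -- main case n ≥ 2
    have h2C : (2 : MvPolynomial (Fin n) ℚ) = C 2 :=
      (map_ofNat C 2).symm
    rw [h2C, homogeneousComponent_C_mul, map_sum]
    have hsum1 : ∀ i : Fin n, (homogeneousComponent n)
          (∑ j ∈ univ.filter (fun j => i < j),
            (∏ k ∈ (univ \ {i, j}), (X k : MvPolynomial (Fin n) ℚ)) *
              (1 - C (1/2 : ℚ) * X i + C (1/12 : ℚ) * X i ^ 2) *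
              (1 - C (1/2 : ℚ) * X j + C (1/12 : ℚ) * X j ^ 2))
        = ∑ j ∈ univ.filter (fun j => i < j),
            ((C (1/8 : ℚ) * ∏ k, X k + C (1/12 : ℚ) * (X i * ∏ k ∈ univ.erase j, X k))
              + (C (1/8 : ℚ) * ∏ k, X k + C (1/12 : ℚ) * (X j * ∏ k ∈ univ.erase i, X k))) := by
      intro i
      rw [map_sum]
      refine Finset.sum_congr rfl fun j hj => ?_
      have hij : i ≠ j := ne_of_lt (mem_filter.mp hj).2
      exact aux_pair hn hij
    rw [Finset.sum_congr rfl fun i _ => hsum1 i]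
    rw [sum_pairs (fun i j =>
      C (1/8 : ℚ) * ∏ k, X k + C (1/12 : ℚ) * (X i * ∏ k ∈ univ.erase j, X k))]
    -- evaluate the inner sums
    have hinner : ∀ i : Fin n, ∑ j ∈ univ.erase i,
          (C (1/8 : ℚ) * ∏ k, X k + C (1/12 : ℚ) * (X i * ∏ k ∈ univ.erase j, X k))
        = (n - 1) • (C (1/8 : ℚ) * ∏ k, X k) +
            C (1/12 : ℚ) * (X i * (esymm (Fin n) ℚ (n-1) - ∏ k ∈ univ.erase i, X k)) := by
      intro i
      rw [Finset.sum_add_distrib, Finset.sum_const, Finset.card_erase_of_mem (mem_univ i),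
        card_univ, Fintype.card_fin, ← Finset.mul_sum, ← Finset.mul_sum]
      congr 2
      rw [esymm_pred (by omega), Finset.sum_erase_eq_sub (mem_univ i)]
    rw [Finset.sum_congr rfl fun i _ => hinner i]
    rw [Finset.sum_add_distrib, Finset.sum_const, card_univ, Fintype.card_fin]
    have hsum2 : ∑ i : Fin n,
          C (1/12 : ℚ) * (X i * (esymm (Fin n) ℚ (n-1) - ∏ k ∈ univ.erase i, X k))
        = C (1/12 : ℚ) * (esymm (Fin n) ℚ 1 * esymm (Fin n) ℚ (n-1) - n • ∏ k, X k) := by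
      rw [← Finset.mul_sum]
      congr 1
      rw [esymm_one, Finset.sum_mul]
      simp only [mul_sub]
      rw [Finset.sum_sub_distrib]
      congr 1
      rw [Finset.sum_congr rfl fun i _ => X_mul_erase i, Finset.sum_const, card_univ,
        Fintype.card_fin]
    rw [hsum2, esymm_top]
    -- final algebra
    simp only [nsmul_eq_mul]
    rw [show ((n - 1 : ℕ) : MvPolynomial (Fin n) ℚ) = C ((n : ℚ) - 1) by
      rw [← C_eq_coe_nat]
      congr 1
      push_cast [Nat.cast_sub (by omega : 1 ≤ n)]
      ring]
    rw [show ((n : ℕ) : MvPolynomial (Fin n) ℚ) = C ((n : ℚ)) from (C_eq_coe_nat n).symm]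
    have hc1 : (C (1/6 : ℚ) : MvPolynomial (Fin n) ℚ) = C 2 * C (1/12 : ℚ) := by
      rw [← map_mul]
      norm_num
    have hc2 : (C ((n:ℚ)^2/4 - 5*(n:ℚ)/12) : MvPolynomial (Fin n) ℚ)
        = C 2 * (C ((n:ℚ)) * (C ((n:ℚ)-1) * C (1/8 : ℚ)))
          - C 2 * C (1/12 : ℚ) * C ((n:ℚ)) := by
      rw [← map_mul, ← map_mul, ← map_mul, ← map_mul, ← map_mul, ← map_sub]
      congr 1
      ring
    rw [hc1, hc2]
    ring
end

section
/- Let n be a natural number and h : ℕ × ℕ → ℕ be supported on {0,...,n}² with h(p,q)=h(q,p) and h(p,q)=0 for p+q odd. Suppose the identity ∑_{k=0}^n (∑_{p+q=2k} h(p,q))·(2k-n)² = ∑_{p=0}^n (∑_q h(p,q))·(2p-n)² holds. Then h(p,q) = 0 for all p ≠ q. -/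
/-!
Write `w(j) = (j - n)²`. Since `h` vanishes off even `p + q`, the left-hand side equals
`∑ h(p,q) w(p+q)`, while by symmetry the right-hand side is `½ ∑ h(p,q) (w(2p) + w(2q))`.
Their difference is `∑ h(p,q) (p - q)²`, a sum of nonnegative terms, so equality forces
`h(p,q) = 0` whenever `p ≠ q`.
-/

open Finset

lemma sum_range_sum_ite_add_eq_two_mul {R : Type*} [Semiring R] {n : ℕ} {g : ℕ × ℕ → R}
    (hodd : ∀ p q, Odd (p + q) → g (p, q) = 0) (f : ℤ → R) :
    ∑ k ∈ range (n + 1), (∑ p ∈ range (n + 1), ∑ q ∈ range (n + 1),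
      if p + q = 2 * k then g (p, q) else 0) * f (2 * k) =
    ∑ p ∈ range (n + 1), ∑ q ∈ range (n + 1), g (p, q) * f (p + q) := by
  simp_rw [sum_mul, ite_mul, zero_mul]
  rw [sum_comm]
  refine sum_congr rfl fun p hp => ?_
  rw [sum_comm]
  refine sum_congr rfl fun q hq => ?_
  rw [mem_range] at hp hq
  rcases Nat.even_or_odd (p + q) with ⟨m, hm⟩ | hpq
  · rw [sum_eq_single_of_mem m (mem_range.2 (by omega)) fun k _ hk => if_neg (by omega),
      if_pos (by omega)]
    congr 2
    omega
  · simp [hodd p q hpq]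

lemma sum_mul_sq_sub_sum_sum_mul_sq {g : ℕ × ℕ → ℤ} (hsym : ∀ p q, g (p, q) = g (q, p))
    (s : Finset ℕ) (c : ℤ) :
    ∑ p ∈ s, (∑ q ∈ s, g (p, q)) * (2 * p - c) ^ 2 -
      ∑ p ∈ s, ∑ q ∈ s, g (p, q) * (p + q - c) ^ 2 =
    ∑ p ∈ s, ∑ q ∈ s, g (p, q) * (p - q) ^ 2 := by
  have hrow : ∑ p ∈ s, (∑ q ∈ s, g (p, q)) * (2 * p - c) ^ 2 =
      ∑ p ∈ s, ∑ q ∈ s, g (p, q) * (2 * p - c) ^ 2 := by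
    simp_rw [sum_mul]
  have hcol : ∑ p ∈ s, (∑ q ∈ s, g (p, q)) * (2 * p - c) ^ 2 =
      ∑ p ∈ s, ∑ q ∈ s, g (p, q) * (2 * q - c) ^ 2 := by
    rw [hrow, sum_comm]
    exact sum_congr rfl fun _ _ => sum_congr rfl fun _ _ => by rw [hsym]
  have hpointwise : ∑ p ∈ s, ∑ q ∈ s, (g (p, q) * (2 * p - c) ^ 2 + g (p, q) * (2 * q - c) ^ 2
      - 2 * (g (p, q) * (p + q - c) ^ 2) - 2 * (g (p, q) * (p - q) ^ 2)) = 0 :=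
    sum_eq_zero fun _ _ => sum_eq_zero fun _ _ => by ring
  simp only [sum_sub_distrib, sum_add_distrib, ← mul_sum] at hpointwise
  linarith

lemma eq_zero_of_sum_sum_mul_sq_eq_zero {g : ℕ × ℕ → ℕ} {s : Finset ℕ}
    (hzero : ∑ p ∈ s, ∑ q ∈ s, (g (p, q) : ℤ) * (p - q) ^ 2 = 0)
    {p q : ℕ} (hp : p ∈ s) (hq : q ∈ s) (hpq : p ≠ q) : g (p, q) = 0 := by
  rw [← sum_product' s s fun p q => (g (p, q) : ℤ) * (p - q) ^ 2] at hzero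
  have := (sum_eq_zero_iff_of_nonneg fun _ _ => by positivity).1 hzero (p, q)
    (mem_product.2 ⟨hp, hq⟩)
  simpa [sub_eq_zero, hpq] using this

theorem stmt10 (n : ℕ) (h : ℕ × ℕ → ℕ)
    (hsupp : ∀ p q, (n < p ∨ n < q) → h (p, q) = 0)
    (hsym : ∀ p q, h (p, q) = h (q, p))
    (hodd : ∀ p q, Odd (p + q) → h (p, q) = 0)
    (heq : (∑ k ∈ range (n + 1),
        (∑ p ∈ range (n + 1), ∑ q ∈ range (n + 1),
          if p + q = 2 * k then (h (p, q) : ℤ) else 0) * ((2 * k : ℤ) - n) ^ 2) =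
      ∑ p ∈ range (n + 1),
        (∑ q ∈ range (n + 1), (h (p, q) : ℤ)) * ((2 * p : ℤ) - n) ^ 2) :
    ∀ p q, p ≠ q → h (p, q) = 0 := by
  intro p q hpq
  by_cases hpn : n < p ∨ n < q
  · exact hsupp p q hpn
  simp only [not_or, not_lt] at hpn
  rw [sum_range_sum_ite_add_eq_two_mul (g := fun x => (h x : ℤ))
    (fun p q hpq => by simp [hodd p q hpq]) fun x => (x - n) ^ 2] at heq
  have hdefect := sum_mul_sq_sub_sum_sum_mul_sq (g := fun x => (h x : ℤ))
    (fun p q => by rw [hsym]) (range (n + 1)) n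
  rw [← heq, sub_self] at hdefect
  exact eq_zero_of_sum_sum_mul_sq_eq_zero hdefect.symm (mem_range.2 (by omega))
    (mem_range.2 (by omega)) hpq
end

section
/- Let h : ℕ×ℕ → ℕ be supported on {0,...,n}² with h(p,q) = h(q,p), h(p,q) = h(n-p,n-q), and h(p,q) = 0 for p+q odd. Define b_{2k} = ∑_{p+q=2k} h(p,q), χ_p = ∑_q h(p,q), and C = ∑_p χ_p·(2p-n)². Then ∑_{k=0}^n b_{2k}·(2k-n)² = C − ∑_{p≠q} h(p,q)·(p-q)², and in particular ∑_k b_{2k}(2k-n)² ≤ C with equality iff h is diagonal. -/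
open Finset

theorem stmt17 (n : ℕ) (h : ℕ × ℕ → ℕ)
    (hsupp : ∀ p q, (n < p ∨ n < q) → h (p, q) = 0)
    (hsym : ∀ p q, h (p, q) = h (q, p))
    (hdual : ∀ p ≤ n, ∀ q ≤ n, h (p, q) = h (n - p, n - q))
    (hodd : ∀ p q, Odd (p + q) → h (p, q) = 0)
    (b : ℕ → ℤ)
    (hb : ∀ k, b k = ∑ p ∈ range (n + 1), ∑ q ∈ range (n + 1),
      if p + q = 2 * k then (h (p, q) : ℤ) else 0)
    (χ : ℕ → ℤ) (hχ : ∀ p, χ p = ∑ q ∈ range (n + 1), (h (p, q) : ℤ))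
    (C : ℤ) (hC : C = ∑ p ∈ range (n + 1), χ p * ((2 * p : ℤ) - n) ^ 2) :
    (∑ k ∈ range (n + 1), b k * ((2 * k : ℤ) - n) ^ 2 =
        C - ∑ p ∈ range (n + 1), ∑ q ∈ range (n + 1),
          if p ≠ q then (h (p, q) : ℤ) * ((p : ℤ) - q) ^ 2 else 0) ∧
    (∑ k ∈ range (n + 1), b k * ((2 * k : ℤ) - n) ^ 2 ≤ C) ∧
    (∑ k ∈ range (n + 1), b k * ((2 * k : ℤ) - n) ^ 2 = C ↔
      ∀ p q, p ≠ q → h (p, q) = 0) := by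
  -- Step 1: S = ∑_{p,q} h(p,q) ((p+q:ℤ)-n)^2
  have hS : ∑ k ∈ range (n + 1), b k * ((2 * k : ℤ) - n) ^ 2
      = ∑ p ∈ range (n + 1), ∑ q ∈ range (n + 1),
          (h (p, q) : ℤ) * (((p : ℤ) + q) - n) ^ 2 := by
    simp only [hb, sum_mul, ite_mul, zero_mul]
    rw [Finset.sum_comm]
    refine Finset.sum_congr rfl fun p hp => ?_
    rw [Finset.sum_comm]
    refine Finset.sum_congr rfl fun q hq => ?_
    rcases Nat.even_or_odd (p + q) with he | ho
    · obtain ⟨m, hm⟩ := he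
      have hmn : m ∈ range (n + 1) := by
        simp only [mem_range] at hp hq ⊢; omega
      rw [Finset.sum_eq_single_of_mem m hmn]
      · have : p + q = 2 * m := by omega
        rw [if_pos this]
        have hc : ((p : ℤ) + q) = 2 * m := by exact_mod_cast this
        rw [hc]
      · intro k _ hk
        rw [if_neg (by omega)]
    · rw [hodd p q ho]
      simp
  -- Step 2: C = S + ∑ h(p,q)(p-q)^2
  have hCeq : C = (∑ p ∈ range (n + 1), ∑ q ∈ range (n + 1),
          (h (p, q) : ℤ) * (((p : ℤ) + q) - n) ^ 2)
      + ∑ p ∈ range (n + 1), ∑ q ∈ range (n + 1),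
          (h (p, q) : ℤ) * ((p : ℤ) - q) ^ 2 := by
    have hC2 : C = ∑ p ∈ range (n + 1), ∑ q ∈ range (n + 1),
        (h (p, q) : ℤ) * ((2 * q : ℤ) - n) ^ 2 := by
      rw [hC]
      simp only [hχ, sum_mul]
      rw [Finset.sum_comm]
      refine Finset.sum_congr rfl fun p _ => Finset.sum_congr rfl fun q _ => ?_
      rw [hsym]
    have hC1 : C = ∑ p ∈ range (n + 1), ∑ q ∈ range (n + 1),
        (h (p, q) : ℤ) * ((2 * p : ℤ) - n) ^ 2 := by
      rw [hC]; simp only [hχ, sum_mul]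
    have : C + C = _ + _ := congrArg₂ (· + ·) hC1 hC2
    rw [← Finset.sum_add_distrib] at this
    simp only [← Finset.sum_add_distrib] at this
    have key : ∀ p q : ℕ, (h (p, q) : ℤ) * ((2 * p : ℤ) - n) ^ 2
        + (h (p, q) : ℤ) * ((2 * q : ℤ) - n) ^ 2
        = 2 * ((h (p, q) : ℤ) * (((p : ℤ) + q) - n) ^ 2
          + (h (p, q) : ℤ) * ((p : ℤ) - q) ^ 2) := fun p q => by ring
    simp only [key, mul_add, Finset.sum_add_distrib, ← Finset.mul_sum] at this
    linarith
  -- the "if" sum equals the full sum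
  have hT : ∑ p ∈ range (n + 1), ∑ q ∈ range (n + 1),
        (if p ≠ q then (h (p, q) : ℤ) * ((p : ℤ) - q) ^ 2 else 0)
      = ∑ p ∈ range (n + 1), ∑ q ∈ range (n + 1),
        (h (p, q) : ℤ) * ((p : ℤ) - q) ^ 2 := by
    refine Finset.sum_congr rfl fun p _ => Finset.sum_congr rfl fun q _ => ?_
    by_cases hpq : p = q
    · subst hpq; simp
    · rw [if_pos hpq]
  have hmain : ∑ k ∈ range (n + 1), b k * ((2 * k : ℤ) - n) ^ 2 =
      C - ∑ p ∈ range (n + 1), ∑ q ∈ range (n + 1),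
        if p ≠ q then (h (p, q) : ℤ) * ((p : ℤ) - q) ^ 2 else 0 := by
    rw [hS, hT, hCeq]; ring
  refine ⟨hmain, ?_, ?_⟩
  · rw [hmain]
    have : 0 ≤ ∑ p ∈ range (n + 1), ∑ q ∈ range (n + 1),
        (if p ≠ q then (h (p, q) : ℤ) * ((p : ℤ) - q) ^ 2 else 0) := by
      refine Finset.sum_nonneg fun p _ => Finset.sum_nonneg fun q _ => ?_
      split
      · positivity
      · exact le_refl 0
    omega
  · rw [hmain]
    constructor
    · intro heq p q hpq
      have hzero : ∑ p ∈ range (n + 1), ∑ q ∈ range (n + 1),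
          (if p ≠ q then (h (p, q) : ℤ) * ((p : ℤ) - q) ^ 2 else 0) = 0 := by omega
      by_cases hcase : p ≤ n ∧ q ≤ n
      · have h1 := (Finset.sum_eq_zero_iff_of_nonneg (fun p _ =>
          Finset.sum_nonneg fun q _ => by split; exacts [by positivity, le_refl 0])).mp hzero
          p (by simp [mem_range]; omega)
        have h2 := (Finset.sum_eq_zero_iff_of_nonneg (fun q _ => by
          split; exacts [by positivity, le_refl 0])).mp h1 q (by simp [mem_range]; omega)
        rw [if_pos hpq] at h2
        have hd : ((p : ℤ) - q) ^ 2 ≠ 0 := by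
          have : (p : ℤ) ≠ q := by exact_mod_cast hpq
          intro hc
          apply this
          have := pow_eq_zero_iff (n := 2) (by norm_num) |>.mp hc
          linarith
        have := mul_eq_zero.mp h2
        rcases this with h3 | h3
        · exact_mod_cast h3
        · exact absurd h3 hd
      · exact hsupp p q (by omega)
    · intro hdiag
      have : ∑ p ∈ range (n + 1), ∑ q ∈ range (n + 1),
          (if p ≠ q then (h (p, q) : ℤ) * ((p : ℤ) - q) ^ 2 else 0) = 0 := by
        refine Finset.sum_eq_zero fun p _ => Finset.sum_eq_zero fun q _ => ?_
        split
        · next hpq => rw [hdiag p q hpq]; simp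
        · rfl
      omega
end
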